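/- arXiv:1202.4239 — 2 statements merged into one kernel-verified Lean document; each statement's English description precedes it below -/
import Mathlib

section
/- Let E be a rank-n degree-δ₀ bundle with Grassmannian framings g_i at ℓ points, satisfying Σ_i s_i ≤ nℓ/2 − δ₀ and Σ_i t_i ≤ nℓ/2 + δ₀ (ℂ*-stability), and let F_{i,0} ⊂ F_{i,1} ⊂ ⋯ ⊂ F_{i,n} ⊂ F_{i,n+1} = E_{p_i} be the compatible flag induced by g_i with weights α_{i,0}=1/2 > α_{i,1} ≥ ⋯ ≥ α_{i,n} > −1/2 = α_{i,n+1}. If (E, flags) is parabolic (semi)stable for one such choice of weights, then (E, g⃗) is (semi)stable as a Grassmannian framed bundle: for every subbundle E' of rank n', the inequality 0 (≤) δ₀/n − δ'₀/n' + Σ_i [(n'−s'_i)/n' − (n'−s'_i−t'_i+t_i)/n] holds. -/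
lemma abel_sum_aux (N : ℕ) (g a : ℕ → ℝ) :
    ∑ j ∈ Finset.range (N + 2), ((g j : ℝ) - if j = 0 then 0 else g (j - 1)) * a j
      = g (N + 1) * a (N + 1) + ∑ j ∈ Finset.range (N + 1), g j * (a j - a (j + 1)) := by
  induction N with
  | zero =>
      rw [Finset.sum_range_succ, Finset.sum_range_succ, Finset.sum_range_zero,
        Finset.sum_range_succ, Finset.sum_range_zero]
      norm_num
      ring
  | succ N ih =>
      have h1 := Finset.sum_range_succ
        (fun j => ((g j : ℝ) - if j = 0 then 0 else g (j - 1)) * a j) (N + 2)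
      have h2 := Finset.sum_range_succ (fun j => g j * (a j - a (j + 1))) (N + 1)
      rw [show N + 1 + 2 = N + 2 + 1 from rfl, h1, ih, show N + 1 + 1 = N + 2 from rfl, h2,
        show N + 2 - 1 = N + 1 from rfl]
      norm_num
      ring



/-- Proposition 2.14 of the paper: let `(E, g⃗)` be a Grassmannian framed bundle of rank
`n`, degree `δ₀` with `ℓ` marked points satisfying the `ℂ*`-stability constraints
`Σ s_i ≤ nℓ/2 - δ₀` and `Σ t_i ≤ nℓ/2 + δ₀`, equipped with the compatible flags
`F_{i,0} ⊂ ⋯ ⊂ F_{i,n+1} = E_{p_i}` induced by `g_i` (recorded through their dimensions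
`G i j = dim F_{i,j}`) and weights `α_{i,0} = 1/2 > α_{i,1} ≥ ⋯ ≥ α_{i,n} > -1/2 =
α_{i,n+1}`.  Subbundles `E'` are recorded by an index type `Sub` with rank, degree,
induced flag dimensions `G'` and induced invariants `s', t'`.  If `(E, flags)` is
parabolic (semi)stable for these weights, then `(E, g⃗)` is (semi)stable as a
Grassmannian framed bundle. -/
theorem parabolic_stable_implies_grassmann_stable
    (n ℓ : ℕ) (hn : 0 < n) (δ₀ : ℤ)
    (s t : Fin ℓ → ℕ) (G : Fin ℓ → ℕ → ℕ) (α : Fin ℓ → ℕ → ℝ)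
    -- the flag of `E` at each marked point:
    (hGmono : ∀ i j, j ≤ n → G i j ≤ G i (j + 1))
    (hGtop : ∀ i, G i (n + 1) = n)
    (hs : ∀ i, G i 0 = s i) (ht : ∀ i, (t i : ℤ) = (n : ℤ) - G i n)
    -- the weights:
    (hα0 : ∀ i, α i 0 = 1 / 2) (hαtop : ∀ i, α i (n + 1) = -(1 / 2))
    (hαmono : ∀ i j, α i (j + 1) ≤ α i j)
    (hα1 : ∀ i, α i 1 < 1 / 2) (hαn : ∀ i, -(1 / 2) < α i n)
    -- `ℂ*`-stability:
    (hCs : ((∑ i, s i : ℕ) : ℝ) ≤ (n : ℝ) * ℓ / 2 - δ₀)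
    (hCt : ((∑ i, t i : ℕ) : ℝ) ≤ (n : ℝ) * ℓ / 2 + δ₀)
    -- the subbundles of `E` with their induced flags and invariants:
    (Sub : Type) (rank : Sub → ℕ) (deg : Sub → ℤ)
    (G' : Sub → Fin ℓ → ℕ → ℕ) (s' t' : Sub → Fin ℓ → ℕ)
    (hr1 : ∀ e, 1 ≤ rank e) (hr2 : ∀ e, rank e < n)
    (hG'mono : ∀ e i j, j ≤ n → G' e i j ≤ G' e i (j + 1))
    (hG'top : ∀ e i, G' e i (n + 1) = rank e)
    (hG'le : ∀ e i j, G' e i j ≤ G i j)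
    (hquot : ∀ e i j k, j ≤ k → k ≤ n + 1 →
      (G' e i k : ℤ) - G' e i j ≤ (G i k : ℤ) - G i j)
    (hs' : ∀ e i, G' e i 0 = s' e i)
    (ht' : ∀ e i, (t' e i : ℤ) = (rank e : ℤ) - G' e i n) :
    -- parabolic degree with respect to the weights `α`:
    let pardeg : ℤ → (Fin ℓ → ℕ → ℕ) → ℝ := fun d g =>
      (d : ℝ) + ∑ i, ∑ j ∈ Finset.range (n + 2),
        ((g i j : ℝ) - if j = 0 then 0 else (g i (j - 1) : ℝ)) * α i j
    -- the Grassmannian-framed stability quantity for a subbundle: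
    let gr : Sub → ℝ := fun e =>
      (δ₀ : ℝ) / n - (deg e : ℝ) / rank e +
        ∑ i, (((rank e : ℝ) - s' e i) / rank e -
          ((rank e : ℝ) - s' e i - t' e i + t i) / n)
    ((∀ e, 0 ≤ pardeg δ₀ G / n - pardeg (deg e) (G' e) / rank e) →
        ∀ e, 0 ≤ gr e) ∧
      ((∀ e, 0 < pardeg δ₀ G / n - pardeg (deg e) (G' e) / rank e) →
        ∀ e, 0 < gr e) := by
  intro pardeg gr
  have hn0 : (0 : ℝ) < (n : ℝ) := by exact_mod_cast hn
  have key : ∀ e, pardeg δ₀ G / n - pardeg (deg e) (G' e) / rank e ≤ gr e := by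
    intro e
    have hr0 : (0 : ℝ) < (rank e : ℝ) := by exact_mod_cast hr1 e
    have hrn : (rank e : ℝ) ≤ (n : ℝ) := by exact_mod_cast (hr2 e).le
    -- Abel-summed form of the two parabolic degrees
    have hP : pardeg δ₀ G = (δ₀ : ℝ) + (-((n : ℝ) * ℓ) / 2 +
        ∑ i, ∑ j ∈ Finset.range (n + 1), (G i j : ℝ) * (α i j - α i (j + 1))) := by
      have h0 : pardeg δ₀ G = (δ₀ : ℝ) + ∑ i, ∑ j ∈ Finset.range (n + 2),
          ((G i j : ℝ) - if j = 0 then 0 else (G i (j - 1) : ℝ)) * α i j := rfl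
      rw [h0]
      have h : ∀ i : Fin ℓ,
          ∑ j ∈ Finset.range (n + 2),
              ((G i j : ℝ) - if j = 0 then 0 else (G i (j - 1) : ℝ)) * α i j
            = -((n : ℝ) / 2) + ∑ j ∈ Finset.range (n + 1),
                (G i j : ℝ) * (α i j - α i (j + 1)) := by
        intro i
        rw [abel_sum_aux n (fun j => (G i j : ℝ)) (α i)]
        rw [hGtop i, hαtop i]
        ring
      rw [Finset.sum_congr rfl fun i _ => h i, Finset.sum_add_distrib, Finset.sum_const,
        Finset.card_univ, Fintype.card_fin, nsmul_eq_mul]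
      ring
    have hP' : pardeg (deg e) (G' e) = (deg e : ℝ) + (-((rank e : ℝ) * ℓ) / 2 +
        ∑ i, ∑ j ∈ Finset.range (n + 1), (G' e i j : ℝ) * (α i j - α i (j + 1))) := by
      have h0 : pardeg (deg e) (G' e) = (deg e : ℝ) + ∑ i, ∑ j ∈ Finset.range (n + 2),
          ((G' e i j : ℝ) - if j = 0 then 0 else (G' e i (j - 1) : ℝ)) * α i j := rfl
      rw [h0]
      have h : ∀ i : Fin ℓ,
          ∑ j ∈ Finset.range (n + 2),
              ((G' e i j : ℝ) - if j = 0 then 0 else (G' e i (j - 1) : ℝ)) * α i j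
            = -((rank e : ℝ) / 2) + ∑ j ∈ Finset.range (n + 1),
                (G' e i j : ℝ) * (α i j - α i (j + 1)) := by
        intro i
        rw [abel_sum_aux n (fun j => (G' e i j : ℝ)) (α i)]
        rw [hG'top e i, hαtop i]
        ring
      rw [Finset.sum_congr rfl fun i _ => h i, Finset.sum_add_distrib, Finset.sum_const,
        Finset.card_univ, Fintype.card_fin, nsmul_eq_mul]
      ring
    -- rewrite the gr-sum
    have hB : ∑ i, (((rank e : ℝ) - s' e i) / rank e -
          ((rank e : ℝ) - s' e i - t' e i + t i) / n)
        = ∑ i, (((G i n : ℝ) - (G' e i n : ℝ) + (G' e i 0 : ℝ)) / n -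
            (G' e i 0 : ℝ) / rank e) := by
      apply Finset.sum_congr rfl
      intro i _
      have h1 : (t i : ℝ) = (n : ℝ) - G i n := by exact_mod_cast ht i
      have h2 : (t' e i : ℝ) = (rank e : ℝ) - G' e i n := by exact_mod_cast ht' e i
      have h3 : (s' e i : ℝ) = (G' e i 0 : ℝ) := by rw [← hs' e i]
      rw [h1, h2, h3]
      field_simp
      ring
    -- per-point inequality
    have hstep : ∀ i : Fin ℓ,
        (∑ j ∈ Finset.range (n + 1), (G i j : ℝ) * (α i j - α i (j + 1))) / n -
            (∑ j ∈ Finset.range (n + 1), (G' e i j : ℝ) * (α i j - α i (j + 1))) / rank e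
          ≤ ((G i n : ℝ) - (G' e i n : ℝ) + (G' e i 0 : ℝ)) / n -
              (G' e i 0 : ℝ) / rank e := by
      intro i
      have hmono0 : ∀ j, j ≤ n + 1 → G' e i 0 ≤ G' e i j := by
        intro j
        induction j with
        | zero => intro _; exact le_rfl
        | succ k ih => intro hj; exact (ih (by omega)).trans (hG'mono e i k (by omega))
      have hsum1 : ∑ j ∈ Finset.range (n + 1), (α i j - α i (j + 1)) = 1 := by
        rw [Finset.sum_range_sub' (α i) (n + 1), hα0 i, hαtop i]
        norm_num
      have hR : ((G i n : ℝ) - (G' e i n : ℝ) + (G' e i 0 : ℝ)) / n -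
            (G' e i 0 : ℝ) / rank e
          = ∑ j ∈ Finset.range (n + 1), (α i j - α i (j + 1)) *
              (((G i n : ℝ) - (G' e i n : ℝ) + (G' e i 0 : ℝ)) / n -
                (G' e i 0 : ℝ) / rank e) := by
        rw [← Finset.sum_mul, hsum1, one_mul]
      have hL : (∑ j ∈ Finset.range (n + 1), (G i j : ℝ) * (α i j - α i (j + 1))) / n -
            (∑ j ∈ Finset.range (n + 1), (G' e i j : ℝ) * (α i j - α i (j + 1))) / rank e
          = ∑ j ∈ Finset.range (n + 1), (α i j - α i (j + 1)) *
              ((G i j : ℝ) / n - (G' e i j : ℝ) / rank e) := by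
        rw [Finset.sum_div, Finset.sum_div, ← Finset.sum_sub_distrib]
        apply Finset.sum_congr rfl
        intro j _
        ring
      rw [hL, hR]
      apply Finset.sum_le_sum
      intro j hj
      have hjn : j ≤ n := Finset.mem_range_succ_iff.mp hj
      have hlam : 0 ≤ α i j - α i (j + 1) := sub_nonneg.mpr (hαmono i j)
      have hb0 : (G' e i 0 : ℝ) ≤ (G' e i j : ℝ) := by exact_mod_cast hmono0 j (by omega)
      have hq : (G' e i n : ℝ) - (G' e i j : ℝ) ≤ (G i n : ℝ) - (G i j : ℝ) := by
        exact_mod_cast hquot e i j n hjn (by omega)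
      have hcore : (G i j : ℝ) / n - (G' e i j : ℝ) / rank e ≤
          ((G i n : ℝ) - (G' e i n : ℝ) + (G' e i 0 : ℝ)) / n -
            (G' e i 0 : ℝ) / rank e := by
        rw [div_sub_div _ _ hn0.ne' hr0.ne', div_sub_div _ _ hn0.ne' hr0.ne',
          div_le_div_iff₀ (mul_pos hn0 hr0) (mul_pos hn0 hr0)]
        have h5 : ((G i j : ℝ) - G i n + G' e i n - G' e i 0) * rank e
            ≤ ((G' e i j : ℝ) - G' e i 0) * n := by
          calc ((G i j : ℝ) - G i n + G' e i n - G' e i 0) * rank e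
              ≤ ((G' e i j : ℝ) - G' e i 0) * rank e :=
                mul_le_mul_of_nonneg_right (by linarith) hr0.le
            _ ≤ ((G' e i j : ℝ) - G' e i 0) * n :=
                mul_le_mul_of_nonneg_left hrn (by linarith)
        nlinarith [mul_le_mul_of_nonneg_right h5 (mul_pos hn0 hr0).le]
      exact mul_le_mul_of_nonneg_left hcore hlam
    -- put everything together
    have hsplit : ∀ A A' : ℝ,
        ((δ₀ : ℝ) + (-((n : ℝ) * ℓ) / 2 + A)) / n -
            ((deg e : ℝ) + (-((rank e : ℝ) * ℓ) / 2 + A')) / rank e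
          = (δ₀ : ℝ) / n - (deg e : ℝ) / rank e + (A / n - A' / rank e) := by
      intro A A'
      field_simp
      ring
    have hsum : (∑ i, ∑ j ∈ Finset.range (n + 1), (G i j : ℝ) * (α i j - α i (j + 1))) / n -
          (∑ i, ∑ j ∈ Finset.range (n + 1), (G' e i j : ℝ) * (α i j - α i (j + 1))) / rank e
        = ∑ i, ((∑ j ∈ Finset.range (n + 1), (G i j : ℝ) * (α i j - α i (j + 1))) / n -
            (∑ j ∈ Finset.range (n + 1), (G' e i j : ℝ) * (α i j - α i (j + 1))) / rank e) := by
      rw [Finset.sum_div, Finset.sum_div, ← Finset.sum_sub_distrib]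
    calc pardeg δ₀ G / n - pardeg (deg e) (G' e) / rank e
        = (δ₀ : ℝ) / n - (deg e : ℝ) / rank e +
            ∑ i, ((∑ j ∈ Finset.range (n + 1), (G i j : ℝ) * (α i j - α i (j + 1))) / n -
              (∑ j ∈ Finset.range (n + 1), (G' e i j : ℝ) * (α i j - α i (j + 1))) / rank e) := by
          rw [hP, hP', hsplit, hsum]
      _ ≤ (δ₀ : ℝ) / n - (deg e : ℝ) / rank e +
            ∑ i, (((G i n : ℝ) - (G' e i n : ℝ) + (G' e i 0 : ℝ)) / n -
              (G' e i 0 : ℝ) / rank e) := by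
          have := Finset.sum_le_sum fun i (_ : i ∈ Finset.univ) => hstep i
          linarith
      _ = gr e := by
          have h0 : gr e = (δ₀ : ℝ) / n - (deg e : ℝ) / rank e +
              ∑ i, (((rank e : ℝ) - s' e i) / rank e -
                ((rank e : ℝ) - s' e i - t' e i + t i) / n) := rfl
          rw [h0, hB]
  exact ⟨fun h e => (h e).trans (key e), fun h e => (h e).trans_le (key e)⟩
end

section
/- Let E_{p}, E_{q} be n-dimensional complex vector spaces, g^p ⊂ E_p ⊕ ℂⁿ and g^q ⊂ E_q ⊕ ℂⁿ be n-dimensional subspaces with projections R^p, R^q to ℂⁿ. Assume R^p(g^p) + R^q(g^q) = ℂⁿ and g^p ∩ ℂⁿ ∩ g^q = 0 (intersecting inside ℂⁿ). Then g = {(e_p, e_q) ∈ E_p ⊕ E_q : ∃ b ∈ ℂⁿ with (e_p, b) ∈ g^p and (e_q, b) ∈ g^q} is an n-dimensional subspace of E_p ⊕ E_q. -/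
/-!
The plane `g` is the image, under `((e_p, b), (e_q, b')) ↦ (e_p, e_q)`, of the kernel of
`((e_p, b), (e_q, b')) ↦ b - b'` on `g^p × g^q`. The spanning condition makes this difference
map onto `ℂⁿ`, so its kernel has dimension `2n - n = n`, and the intersection condition makes the
projection injective on that kernel.
-/

namespace Submodule

section Ring

variable {R V W B : Type*} [Ring R] [AddCommGroup V] [Module R V] [AddCommGroup W] [Module R W]
  [AddCommGroup B] [Module R B]

/-- The composite of the linear relation `p` with the converse of `q`; this is the paper's `g`. -/
def fiberedComposite (p : Submodule R (V × B)) (q : Submodule R (W × B)) :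
    Submodule R (V × W) where
  carrier := {x | ∃ b : B, (x.1, b) ∈ p ∧ (x.2, b) ∈ q}
  add_mem' := by
    rintro x y ⟨b, hpx, hqx⟩ ⟨c, hpy, hqy⟩
    exact ⟨b + c, add_mem hpx hpy, add_mem hqx hqy⟩
  zero_mem' := ⟨0, zero_mem p, zero_mem q⟩
  smul_mem' := by
    rintro r x ⟨b, hp, hq⟩
    exact ⟨r • b, smul_mem p r hp, smul_mem q r hq⟩

variable (p : Submodule R (V × B)) (q : Submodule R (W × B))

def sndDiff : p × q →ₗ[R] B :=
  ((LinearMap.snd R V B).domRestrict p).coprod (-(LinearMap.snd R W B).domRestrict q)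

def fstProdMap : p × q →ₗ[R] V × W :=
  ((LinearMap.fst R V B).domRestrict p).prodMap ((LinearMap.fst R W B).domRestrict q)

@[simp]
theorem sndDiff_apply (z : p × q) : sndDiff p q z = (z.1 : V × B).2 - (z.2 : W × B).2 := by
  simp [sndDiff, sub_eq_add_neg]

theorem mem_ker_sndDiff {z : p × q} :
    z ∈ LinearMap.ker (sndDiff p q) ↔ (z.1 : V × B).2 = (z.2 : W × B).2 := by
  rw [LinearMap.mem_ker, sndDiff_apply, sub_eq_zero]

theorem range_sndDiff :
    LinearMap.range (sndDiff p q) = p.map (LinearMap.snd R V B) ⊔ q.map (LinearMap.snd R W B) := by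
  rw [sndDiff, LinearMap.range_coprod, LinearMap.range_neg, LinearMap.range_domRestrict,
    LinearMap.range_domRestrict]

theorem map_ker_sndDiff :
    (LinearMap.ker (sndDiff p q)).map (fstProdMap p q) = fiberedComposite p q := by
  ext x
  constructor
  · rintro ⟨⟨⟨⟨v, b⟩, hp⟩, ⟨⟨w, c⟩, hq⟩⟩, hz, rfl⟩
    obtain rfl : b = c := (mem_ker_sndDiff p q).mp hz
    exact ⟨b, hp, hq⟩
  · rintro ⟨b, hp, hq⟩
    exact ⟨(⟨_, hp⟩, ⟨_, hq⟩), (mem_ker_sndDiff p q).mpr rfl, rfl⟩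

theorem injective_fstProdMap_domRestrict_ker_sndDiff
    (h : ∀ b : B, ((0 : V), b) ∈ p → ((0 : W), b) ∈ q → b = 0) :
    Function.Injective ((fstProdMap p q).domRestrict (LinearMap.ker (sndDiff p q))) := by
  rw [injective_iff_map_eq_zero]
  rintro ⟨⟨⟨⟨v, b⟩, hp⟩, ⟨⟨w, c⟩, hq⟩⟩, hz⟩ hzero
  obtain rfl : b = c := (mem_ker_sndDiff p q).mp hz
  obtain ⟨rfl, rfl⟩ := Prod.mk.inj hzero
  obtain rfl := h b hp hq
  rfl

end Ring

variable {K V W B : Type*} [DivisionRing K] [AddCommGroup V] [Module K V] [AddCommGroup W]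
  [Module K W] [AddCommGroup B] [Module K B]
  {p : Submodule K (V × B)} {q : Submodule K (W × B)}

theorem finrank_fiberedComposite_add_finrank [Module.Finite K p] [Module.Finite K q]
    (hspan : p.map (LinearMap.snd K V B) ⊔ q.map (LinearMap.snd K W B) = ⊤)
    (hint : ∀ b : B, ((0 : V), b) ∈ p → ((0 : W), b) ∈ q → b = 0) :
    Module.finrank K (fiberedComposite p q) + Module.finrank K B =
      Module.finrank K p + Module.finrank K q := by
  have hrank := LinearMap.finrank_range_add_finrank_ker (sndDiff p q)
  rw [range_sndDiff, hspan, finrank_top, Module.finrank_prod] at hrank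
  rw [← hrank, ← map_ker_sndDiff, ← LinearMap.range_domRestrict,
    LinearMap.finrank_range_of_inj (injective_fstProdMap_domRestrict_ker_sndDiff p q hint),
    add_comm]

end Submodule

theorem composite_plane_is_n_dimensional_general (n : ℕ)
    (Ep Eq : Type) [AddCommGroup Ep] [Module ℂ Ep] [AddCommGroup Eq] [Module ℂ Eq]
    [FiniteDimensional ℂ Ep] [FiniteDimensional ℂ Eq]
    (gp : Submodule ℂ (Ep × (Fin n → ℂ))) (gq : Submodule ℂ (Eq × (Fin n → ℂ)))
    (hgp : Module.finrank ℂ gp = n) (hgq : Module.finrank ℂ gq = n)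
    (hspan : Submodule.map (LinearMap.snd ℂ Ep (Fin n → ℂ)) gp ⊔
      Submodule.map (LinearMap.snd ℂ Eq (Fin n → ℂ)) gq = ⊤)
    (hint : ∀ b : Fin n → ℂ, ((0 : Ep), b) ∈ gp → ((0 : Eq), b) ∈ gq → b = 0) :
    ∃ S : Submodule ℂ (Ep × Eq),
      (↑S : Set (Ep × Eq)) =
        {x | ∃ b : Fin n → ℂ, (x.1, b) ∈ gp ∧ (x.2, b) ∈ gq} ∧
      Module.finrank ℂ S = n := by
  refine ⟨Submodule.fiberedComposite gp gq, rfl, ?_⟩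
  have h := Submodule.finrank_fiberedComposite_add_finrank hspan hint
  rw [Module.finrank_fin_fun, hgp, hgq] at h
  omega

/-- Section 5.1 of the paper: if `g^p ⊂ E_p ⊕ ℂⁿ` and `g^q ⊂ E_q ⊕ ℂⁿ` are `n`-planes
with `R^p(g^p) + R^q(g^q) = ℂⁿ` and `g^p ∩ ℂⁿ ∩ g^q = 0`, then
`g = {(e_p, e_q) : ∃ b, (e_p, b) ∈ g^p and (e_q, b) ∈ g^q}` is an `n`-dimensional
subspace of `E_p ⊕ E_q`. -/
theorem composite_plane_is_n_dimensional (n : ℕ)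
    (Ep Eq : Type) [AddCommGroup Ep] [Module ℂ Ep] [AddCommGroup Eq] [Module ℂ Eq]
    [FiniteDimensional ℂ Ep] [FiniteDimensional ℂ Eq]
    (hEp : Module.finrank ℂ Ep = n) (hEq : Module.finrank ℂ Eq = n)
    (gp : Submodule ℂ (Ep × (Fin n → ℂ))) (gq : Submodule ℂ (Eq × (Fin n → ℂ)))
    (hgp : Module.finrank ℂ gp = n) (hgq : Module.finrank ℂ gq = n)
    (hspan : Submodule.map (LinearMap.snd ℂ Ep (Fin n → ℂ)) gp ⊔
      Submodule.map (LinearMap.snd ℂ Eq (Fin n → ℂ)) gq = ⊤)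
    (hint : ∀ b : Fin n → ℂ, ((0 : Ep), b) ∈ gp → ((0 : Eq), b) ∈ gq → b = 0) :
    ∃ S : Submodule ℂ (Ep × Eq),
      (↑S : Set (Ep × Eq)) =
        {x | ∃ b : Fin n → ℂ, (x.1, b) ∈ gp ∧ (x.2, b) ∈ gq} ∧
      Module.finrank ℂ S = n :=
  composite_plane_is_n_dimensional_general n Ep Eq gp gq hgp hgq hspan hint
end
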